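/- Let F be an infinite field with characteristic different from 2. Then the poly-approximation closure of VPe(F) equals VPe(F): if for a family (f_n) there exist polynomials f_{n;1},…,f_{n;e(n)} over F with e(n) ∈ poly(n) such that f_n + ε f_{n;1} + … + ε^{e(n)} f_{n;e(n)} is computed by arithmetic formulas over F(ε) of size poly(n), then (f_n) itself has polynomially bounded formula size over F. -/

import Mathlib

open MvPolynomial

noncomputable section

/-- A function `ℕ → ℕ` is polynomially bounded. -/
def PolyBounded (f : ℕ → ℕ) : Prop := ∃ c : ℕ, ∀ n, f n ≤ (n + 2) ^ c

/-- A sequence of multivariate polynomials is a family: `f n` uses only variables `x_i`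
with `i < v n`, for a polynomially bounded `v`. -/
def IsPolyFamily {F : Type} [CommSemiring F] (f : ℕ → MvPolynomial ℕ F) : Prop :=
  ∃ v : ℕ → ℕ, PolyBounded v ∧ ∀ n, ∀ i ∈ (f n).vars, i < v n

/-- Arithmetic formulas over `F` in variables `x_i`, `i : ℕ`: expressions built from
variables and constants by binary additions and multiplications. -/
inductive Formula (F : Type) where
  | var : ℕ → Formula F
  | const : F → Formula F
  | add : Formula F → Formula F → Formula F
  | mul : Formula F → Formula F → Formula F

namespace Formula

variable {F : Type} [CommSemiring F]

/-- The polynomial computed by an arithmetic formula. -/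
def eval : Formula F → MvPolynomial ℕ F
  | var i => X i
  | const c => C c
  | add φ ψ => φ.eval + ψ.eval
  | mul φ ψ => φ.eval * ψ.eval

/-- The size of a formula: the number of (binary) operations. -/
def size : Formula F → ℕ
  | var _ => 0
  | const _ => 0
  | add φ ψ => φ.size + ψ.size + 1
  | mul φ ψ => φ.size + ψ.size + 1

/-- The depth of a formula: the length of the longest root-to-leaf path. -/
def depth : Formula F → ℕ
  | var _ => 0
  | const _ => 0
  | add φ ψ => max φ.depth ψ.depth + 1
  | mul φ ψ => max φ.depth ψ.depth + 1

end Formula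

/-- A general affine linear form `∑ αᵢ xᵢ + β`, i.e. a polynomial of total degree ≤ 1. -/
def IsGenForm {F : Type} [CommSemiring F] (p : MvPolynomial ℕ F) : Prop := p.totalDegree ≤ 1

/-- A single variable or a constant. -/
def IsWeakestForm {F : Type} [CommSemiring F] (p : MvPolynomial ℕ F) : Prop :=
  (∃ i, p = X i) ∨ ∃ c, p = C c

/-- A simple affine linear form `α·xᵢ + β`. -/
def IsWeakForm {F : Type} [CommSemiring F] (p : MvPolynomial ℕ F) : Prop :=
  ∃ (α β : F) (i : ℕ), p = C α * X i + C β

/-- An affine linear form in at most two variables, `α·xᵢ + β·xⱼ + γ`. -/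
def IsWeakPlusForm {F : Type} [CommSemiring F] (p : MvPolynomial ℕ F) : Prop :=
  ∃ (α β γ : F) (i j : ℕ), p = C α * X i + C β * X j + C γ

/-- `ABPComputes form k s p`: some width-`k` algebraic branching program of size `s`, all of
whose matrix entries satisfy the predicate `form`, computes the polynomial `p`; that is,
`p = vᵀ · M_s ⋯ M_1 · w` for vectors `v, w ∈ F^k` and matrices `M_i` with entries of
type `form`. -/
def ABPComputes {F : Type} [CommSemiring F] (form : MvPolynomial ℕ F → Prop)
    (k s : ℕ) (p : MvPolynomial ℕ F) : Prop :=
  ∃ (v w : Fin k → F) (M : Fin s → Matrix (Fin k) (Fin k) (MvPolynomial ℕ F)),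
    (∀ (i : Fin s) (a b : Fin k), form (M i a b)) ∧
    p = dotProduct (fun a => C (v a))
          (Matrix.mulVec (List.ofFn M).prod fun a => C (w a))

/-- The class `VP_k^*`: families computable by width-`k` ABPs, with entries of label
type `form`, of polynomially bounded size. -/
def VPkClass (F : Type) [CommSemiring F] (k : ℕ)
    (form : MvPolynomial ℕ F → Prop) : Set (ℕ → MvPolynomial ℕ F) :=
  { f | IsPolyFamily f ∧
        ∃ s : ℕ → ℕ, PolyBounded s ∧ ∀ n, ∃ s' ≤ s n, ABPComputes form k s' (f n) }

/-- The class `VPe`: families computable by arithmetic formulas of polynomially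
bounded size. -/
def VPe (F : Type) [CommSemiring F] : Set (ℕ → MvPolynomial ℕ F) :=
  { f | IsPolyFamily f ∧
        ∃ s : ℕ → ℕ, PolyBounded s ∧ ∀ n, ∃ φ : Formula F, φ.size ≤ s n ∧ φ.eval = f n }

/-- The inclusion `F[x] → F(ε)[x]`. -/
def liftε (F : Type) [Field F] : MvPolynomial ℕ F →+* MvPolynomial ℕ (RatFunc F) :=
  MvPolynomial.map (algebraMap F (RatFunc F))

/-- The inclusion `F[ε][x] → F(ε)[x]`. -/
def liftPolyε (F : Type) [Field F] :
    MvPolynomial ℕ (Polynomial F) →+* MvPolynomial ℕ (RatFunc F) :=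
  MvPolynomial.map (algebraMap (Polynomial F) (RatFunc F))

/-- The approximation closure of a class `Cl` given over `F(ε)`: families `(f_n)` over `F`
for which there are error polynomials `f_{n;1}, …, f_{n;e(n)}` over `F` such that the family
`g_n = f_n + ε f_{n;1} + ⋯ + ε^{e(n)} f_{n;e(n)}` belongs to `Cl` over `F(ε)`. -/
def ApproxClosure (F : Type) [Field F]
    (Cl : Set (ℕ → MvPolynomial ℕ (RatFunc F))) : Set (ℕ → MvPolynomial ℕ F) :=
  { f | IsPolyFamily f ∧ ∃ (e : ℕ → ℕ) (ferr : ℕ → ℕ → MvPolynomial ℕ F),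
      (fun n => liftε F (f n) + ∑ i ∈ Finset.range (e n),
          C ((RatFunc.X : RatFunc F) ^ (i + 1)) * liftε F (ferr n i)) ∈ Cl }

/-- The poly-approximation closure: as `ApproxClosure`, with the error degree `e(n)`
additionally required to be polynomially bounded. -/
def PolyApproxClosure (F : Type) [Field F]
    (Cl : Set (ℕ → MvPolynomial ℕ (RatFunc F))) : Set (ℕ → MvPolynomial ℕ F) :=
  { f | IsPolyFamily f ∧ ∃ e : ℕ → ℕ, PolyBounded e ∧
      ∃ ferr : ℕ → ℕ → MvPolynomial ℕ F,
      (fun n => liftε F (f n) + ∑ i ∈ Finset.range (e n),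
          C ((RatFunc.X : RatFunc F) ^ (i + 1)) * liftε F (ferr n i)) ∈ Cl }

/-- The hypercube sum `∑_{b ∈ {0,1}^p} g(b, x)`: the first `p` variables of `g` are summed
over all Boolean assignments, and variable `p + i` of `g` is renamed to `x_i`. -/
def hcSum {F : Type} [CommSemiring F] (p : ℕ) (g : MvPolynomial ℕ F) : MvPolynomial ℕ F :=
  ∑ b : Fin p → Bool,
    MvPolynomial.aeval
      (fun i : ℕ => if h : i < p then (if b ⟨i, h⟩ then 1 else 0) else X (i - p)) g

/-- The nondeterminism closure `N(Cl)`: families `(f_n)` with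
`f_n(x) = ∑_{b ∈ {0,1}^{p(n)}} g_{q(n)}(b,x)` for some `(g_n) ∈ Cl` and polynomially
bounded `p`, `q`. -/
def Nclosure {F : Type} [CommSemiring F] (Cl : Set (ℕ → MvPolynomial ℕ F)) :
    Set (ℕ → MvPolynomial ℕ F) :=
  { f | IsPolyFamily f ∧ ∃ g ∈ Cl, ∃ p q : ℕ → ℕ, PolyBounded p ∧ PolyBounded q ∧
        ∀ n, f n = hcSum (p n) (g (q n)) }

/-- The matrix `Q(f) = [[f, 1], [1, 0]]`. -/
def Qmat {R : Type} [CommSemiring R] (f : MvPolynomial ℕ R) :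
    Matrix (Fin 2) (Fin 2) (MvPolynomial ℕ R) := !![f, 1; 1, 0]

/-- A primitive Q-matrix: `Q(ℓ)` for a parametrized affine linear form `ℓ`, i.e. an affine
linear form in the `x`-variables with coefficients in `F(ε)`. -/
def IsPrimitiveQ (F : Type) [Field F]
    (M : Matrix (Fin 2) (Fin 2) (MvPolynomial ℕ (RatFunc F))) : Prop :=
  ∃ ℓ : MvPolynomial ℕ (RatFunc F), ℓ.totalDegree ≤ 1 ∧ M = Qmat ℓ

/-- `M` can be written as a product of `n` primitive Q-matrices. -/
def IsProdPrimQ (F : Type) [Field F] (n : ℕ)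
    (M : Matrix (Fin 2) (Fin 2) (MvPolynomial ℕ (RatFunc F))) : Prop :=
  ∃ L : Fin n → Matrix (Fin 2) (Fin 2) (MvPolynomial ℕ (RatFunc F)),
    (∀ i, IsPrimitiveQ F (L i)) ∧ M = (List.ofFn L).prod

/-- `M ∈ Q(f) + O(ε^k)`: `M = Q(f) + ε^k · E` for some matrix `E` with entries
in `F[ε][x]`. -/
def InQErr (F : Type) [Field F] (f : MvPolynomial ℕ F) (k : ℕ)
    (M : Matrix (Fin 2) (Fin 2) (MvPolynomial ℕ (RatFunc F))) : Prop :=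
  ∃ E : Matrix (Fin 2) (Fin 2) (MvPolynomial ℕ (Polynomial F)),
    M = Qmat (liftε F f) +
      (C ((RatFunc.X : RatFunc F) ^ k) : MvPolynomial ℕ (RatFunc F)) • E.map (liftPolyε F)

/-- `M` has entries in `F[ε][x]` and error degree at most `e`: every entry has degree at
most `e` in `ε`. -/
def ErrDegLE (F : Type) [Field F]
    (M : Matrix (Fin 2) (Fin 2) (MvPolynomial ℕ (RatFunc F))) (e : ℕ) : Prop :=
  ∃ E : Matrix (Fin 2) (Fin 2) (MvPolynomial ℕ (Polynomial F)),
    M = E.map (liftPolyε F) ∧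
    ∀ (a b : Fin 2) (m : ℕ →₀ ℕ), (MvPolynomial.coeff m (E a b)).natDegree ≤ e

/-- The generalized Fibonacci polynomials: `F_0 = 1`, `F_1 = x_1`,
`F_n = x_n · F_{n-1} + F_{n-2}` (variables indexed from 0). -/
def fibPoly (R : Type) [CommSemiring R] : ℕ → MvPolynomial ℕ R
  | 0 => 1
  | 1 => X 0
  | n + 2 => X (n + 1) * fibPoly R (n + 1) + fibPoly R n

/-- `f` is a degeneration of the Fibonacci polynomial `F_m` witnessing border Fibonacci
complexity at most `m`: there are parametrized affine linear forms `ℓ_1, …, ℓ_m` with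
`F_m(ℓ_1, …, ℓ_m) = f + ε·g` for some `g ∈ F[ε][x]`. -/
def FibBorderProj (F : Type) [Field F] (f : MvPolynomial ℕ F) (m : ℕ) : Prop :=
  ∃ ℓ : ℕ → MvPolynomial ℕ (RatFunc F),
    (∀ i, (ℓ i).totalDegree ≤ 1) ∧
    ∃ g : MvPolynomial ℕ (Polynomial F),
      MvPolynomial.aeval ℓ (fibPoly (RatFunc F) m) =
        liftε F f + C (RatFunc.X : RatFunc F) * liftPolyε F g

/-! Substituting for `ε` a point `α ∈ F` at which no constant of a formula for
`g = f + ε f₁ + ⋯ + ε^e f_e` has a pole gives a formula over `F` of the same size for `g(α)`.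
As `F` is infinite there are `e + 1` distinct such points `α_j`, and since `g` has degree at
most `e` in `ε`, interpolation recovers `f = g(0) = ∑ⱼ λⱼ g(αⱼ)`, where the weights `λⱼ` solve a
Vandermonde system. This is a formula of size `(e + 1)(s + 2)`. -/

namespace PolyBounded

lemma mul {f g : ℕ → ℕ} (hf : PolyBounded f) (hg : PolyBounded g) :
    PolyBounded fun n => f n * g n := by
  obtain ⟨a, ha⟩ := hf
  obtain ⟨b, hb⟩ := hg
  exact ⟨a + b, fun n => pow_add (n + 2) a b ▸ Nat.mul_le_mul (ha n) (hb n)⟩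

lemma add_const {f : ℕ → ℕ} (hf : PolyBounded f) (k : ℕ) : PolyBounded fun n => f n + k := by
  obtain ⟨a, ha⟩ := hf
  refine ⟨a + k, fun n => ?_⟩
  have h_one : 1 ≤ (n + 2) ^ a := Nat.one_le_pow _ _ (by omega)
  have h_k : k + 1 ≤ (n + 2) ^ k :=
    Nat.lt_two_pow_self.trans_le (Nat.pow_le_pow_left (by omega) k)
  calc f n + k ≤ (n + 2) ^ a * (k + 1) := by nlinarith [ha n]
    _ ≤ (n + 2) ^ (a + k) := by rw [pow_add]; exact Nat.mul_le_mul_left _ h_k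

end PolyBounded

lemma IsPolyFamily.map {F K : Type} [CommSemiring F] [CommSemiring K] (g : F →+* K)
    {f : ℕ → MvPolynomial ℕ F} (hf : IsPolyFamily f) : IsPolyFamily fun n => map g (f n) := by
  obtain ⟨v, hv, hvars⟩ := hf
  exact ⟨v, hv, fun n i hi => hvars n i (vars_map (f n) g hi)⟩

namespace Formula

variable {F K : Type}

def mapC (g : F → K) : Formula F → Formula K
  | var i => var i
  | const c => const (g c)
  | add φ ψ => add (φ.mapC g) (ψ.mapC g)
  | mul φ ψ => mul (φ.mapC g) (ψ.mapC g)

@[simp]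
lemma size_mapC (g : F → K) (φ : Formula F) : (φ.mapC g).size = φ.size := by
  induction φ <;> simp [mapC, size, *]

def consts : Formula F → List F
  | var _ => []
  | const c => [c]
  | add φ ψ => φ.consts ++ ψ.consts
  | mul φ ψ => φ.consts ++ ψ.consts

lemma exists_mapC_subtype_eq {K : Type} [CommRing K] (S : Subring K) (φ : Formula K)
    (h : ∀ c ∈ φ.consts, c ∈ S) : ∃ ψ : Formula S, ψ.mapC S.subtype = φ := by
  induction φ with
  | var i => exact ⟨var i, rfl⟩
  | const c => exact ⟨const ⟨c, h c (by simp [consts])⟩, rfl⟩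
  | add φ₁ φ₂ ih₁ ih₂ =>
    obtain ⟨ψ₁, rfl⟩ := ih₁ fun c hc => h c (by simp [consts, hc])
    obtain ⟨ψ₂, rfl⟩ := ih₂ fun c hc => h c (by simp [consts, hc])
    exact ⟨add ψ₁ ψ₂, rfl⟩
  | mul φ₁ φ₂ ih₁ ih₂ =>
    obtain ⟨ψ₁, rfl⟩ := ih₁ fun c hc => h c (by simp [consts, hc])
    obtain ⟨ψ₂, rfl⟩ := ih₂ fun c hc => h c (by simp [consts, hc])
    exact ⟨mul ψ₁ ψ₂, rfl⟩

variable [CommSemiring F] [CommSemiring K]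

@[simp]
lemma eval_mapC (g : F →+* K) (φ : Formula F) : (φ.mapC g).eval = map g φ.eval := by
  induction φ <;> simp [mapC, eval, *]

protected def sum (l : List (Formula F)) : Formula F := l.foldr add (const 0)

lemma eval_sum (l : List (Formula F)) : (Formula.sum l).eval = (l.map eval).sum := by
  induction l with
  | nil => simp [Formula.sum, eval]
  | cons φ l ih => simp_all [Formula.sum, eval]

lemma size_sum_le {l : List (Formula F)} {s : ℕ} (h : ∀ φ ∈ l, φ.size ≤ s) :
    (Formula.sum l).size ≤ l.length * (s + 1) := by
  induction l with
  | nil => simp [Formula.sum, size]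
  | cons φ l ih =>
    simp only [List.mem_cons, forall_eq_or_imp] at h
    have := ih h.2
    simp only [Formula.sum, List.foldr_cons, size, List.length_cons] at this ⊢
    nlinarith [h.1]

end Formula

lemma VPe.map {F K : Type} [CommSemiring F] [CommSemiring K] (g : F →+* K)
    {f : ℕ → MvPolynomial ℕ F} (hf : f ∈ VPe F) : (fun n => map g (f n)) ∈ VPe K := by
  obtain ⟨hfam, s, hs, hformula⟩ := hf
  refine ⟨hfam.map g, s, hs, fun n => ?_⟩
  obtain ⟨φ, hφsize, hφ⟩ := hformula n
  exact ⟨φ.mapC g, by simpa using hφsize, by simp [hφ]⟩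

namespace RatFunc

variable {F : Type} [Field F]

lemma eval_denom_add_ne_zero {α : F} {x y : RatFunc F} (hx : x.denom.eval α ≠ 0)
    (hy : y.denom.eval α ≠ 0) : (x + y).denom.eval α ≠ 0 :=
  ne_zero_of_dvd_ne_zero (Polynomial.eval_mul (x := α) ▸ mul_ne_zero hx hy)
    (Polynomial.eval_dvd (denom_add_dvd x y))

lemma eval_denom_mul_ne_zero {α : F} {x y : RatFunc F} (hx : x.denom.eval α ≠ 0)
    (hy : y.denom.eval α ≠ 0) : (x * y).denom.eval α ≠ 0 :=
  ne_zero_of_dvd_ne_zero (Polynomial.eval_mul (x := α) ▸ mul_ne_zero hx hy)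
    (Polynomial.eval_dvd (denom_mul_dvd x y))

/-- The local ring of `F(ε)` at `ε = α`. -/
def definedAt (α : F) : Subring (RatFunc F) where
  carrier := {x | x.denom.eval α ≠ 0}
  one_mem' := by simp [denom_one]
  zero_mem' := by simp [denom_zero]
  add_mem' := eval_denom_add_ne_zero
  mul_mem' := eval_denom_mul_ne_zero
  neg_mem' {x} hx := by
    rw [← neg_one_mul, ← map_one (algebraMap (Polynomial F) (RatFunc F)), ← map_neg]
    exact eval_denom_mul_ne_zero (by rw [denom_algebraMap]; simp) hx

lemma algebraMap_mem_definedAt (α : F) (p : Polynomial F) :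
    algebraMap (Polynomial F) (RatFunc F) p ∈ definedAt α := by
  simp [definedAt]

def evalAt (α : F) : definedAt α →+* F where
  toFun x := eval (RingHom.id F) α x
  map_one' := eval_one _ _
  map_zero' := eval_zero _ _
  map_add' x y := eval_add _ _ x.2 y.2
  map_mul' x y := eval_mul _ _ x.2 y.2

lemma evalAt_comp_codRestrict (α : F) :
    (evalAt α).comp ((algebraMap (Polynomial F) (RatFunc F)).codRestrict (definedAt α)
      (algebraMap_mem_definedAt α)) = Polynomial.evalRingHom α := by
  ext <;> simp [evalAt]

end RatFunc

section

variable {F : Type} [Field F]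

lemma Formula.exists_specialize {α : F} (φ : Formula (RatFunc F))
    (G : MvPolynomial ℕ (Polynomial F))
    (hφ : φ.eval = map (algebraMap (Polynomial F) (RatFunc F)) G)
    (hα : ∀ c ∈ φ.consts, c ∈ RatFunc.definedAt α) :
    ∃ σ : Formula F, σ.size = φ.size ∧ σ.eval = map (Polynomial.evalRingHom α) G := by
  obtain ⟨ψ, rfl⟩ := Formula.exists_mapC_subtype_eq _ φ hα
  set ι := (algebraMap (Polynomial F) (RatFunc F)).codRestrict (RatFunc.definedAt α)
    (RatFunc.algebraMap_mem_definedAt α)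
  have hψ : ψ.eval = map ι G :=
    map_injective (RatFunc.definedAt α).subtype Subtype.val_injective <| by
      rw [← Formula.eval_mapC, hφ, map_map]; rfl
  refine ⟨ψ.mapC (RatFunc.evalAt α), by simp, ?_⟩
  rw [Formula.eval_mapC, hψ, map_map, RatFunc.evalAt_comp_codRestrict]

lemma Polynomial.exists_injective_eval_ne_zero [Infinite F] {d : Polynomial F} (hd : d ≠ 0)
    (N : ℕ) : ∃ α : Fin N → F, Function.Injective α ∧ ∀ j, d.eval (α j) ≠ 0 := by
  have hinf : {x | ¬ d.IsRoot x}.Infinite :=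
    (Polynomial.finite_setOfPred_isRoot hd).infinite_compl
  let emb : Fin N ↪ F :=
    (Fin.valEmbedding.trans hinf.natEmbedding).trans (Function.Embedding.subtype _)
  exact ⟨emb, emb.injective, fun j => (hinf.natEmbedding _ j).2⟩

lemma RatFunc.exists_injective_forall_mem_definedAt [Infinite F] (cs : List (RatFunc F))
    (N : ℕ) : ∃ α : Fin N → F, Function.Injective α ∧ ∀ j, ∀ c ∈ cs, c ∈ definedAt (α j) := by
  obtain ⟨α, hα, hd⟩ := Polynomial.exists_injective_eval_ne_zero
    (List.prod_ne_zero (by simp [denom_ne_zero] : (0 : Polynomial F) ∉ cs.map denom)) N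
  exact ⟨α, hα, fun j c hc => ne_zero_of_dvd_ne_zero (hd j)
    (Polynomial.eval_dvd (List.dvd_prod (List.mem_map_of_mem hc)))⟩

lemma exists_sum_mul_pow_eq_ite {N : ℕ} {α : Fin N → F} (hα : Function.Injective α) :
    ∃ w : Fin N → F, ∀ i < N, ∑ j, w j * α j ^ i = if i = 0 then 1 else 0 := by
  set V := Matrix.vandermonde α
  have hV : IsUnit V.det := isUnit_iff_ne_zero.2 (Matrix.det_vandermonde_ne_zero_iff.2 hα)
  set e₀ : Fin N → F := fun i => if (i : ℕ) = 0 then 1 else 0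
  refine ⟨Matrix.vecMul e₀ V⁻¹, fun i hi => ?_⟩
  have h := congrFun (show Matrix.vecMul (Matrix.vecMul e₀ V⁻¹) V = e₀ by
    rw [Matrix.vecMul_vecMul, Matrix.nonsing_inv_mul V hV, Matrix.vecMul_one]) ⟨i, hi⟩
  simpa [Matrix.vecMul, dotProduct, V, Matrix.vandermonde, e₀] using h

lemma sum_smul_sum_pow_smul {M : Type} [AddCommMonoid M] [Module F M] {N : ℕ}
    {α w : Fin (N + 1) → F} (hw : ∀ i < N + 1, ∑ j, w j * α j ^ i = if i = 0 then 1 else 0)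
    (v : ℕ → M) : ∑ j, w j • ∑ i ∈ Finset.range (N + 1), α j ^ i • v i = v 0 := by
  simp_rw [Finset.smul_sum, smul_smul]
  rw [Finset.sum_comm]
  simp_rw [← Finset.sum_smul]
  rw [Finset.sum_congr rfl fun i hi => by rw [hw i (Finset.mem_range.1 hi)]]
  simp

def sumEpsPow {σ : Type} (v : ℕ → MvPolynomial σ F) (N : ℕ) : MvPolynomial σ (Polynomial F) :=
  ∑ i ∈ Finset.range N, C (Polynomial.X ^ i) * map Polynomial.C (v i)

lemma map_evalRingHom_sumEpsPow {σ : Type} (α : F) (v : ℕ → MvPolynomial σ F) (N : ℕ) :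
    map (Polynomial.evalRingHom α) (sumEpsPow v N) = ∑ i ∈ Finset.range N, α ^ i • v i := by
  have hC : (Polynomial.evalRingHom α).comp Polynomial.C = RingHom.id F :=
    Polynomial.eval₂RingHom_comp_C _ _
  simp [sumEpsPow, map_map, hC, map_id, smul_eq_C_mul]

lemma map_algebraMap_sumEpsPow {σ : Type} (v : ℕ → MvPolynomial σ F) (N : ℕ) :
    map (algebraMap (Polynomial F) (RatFunc F)) (sumEpsPow v N) =
      ∑ i ∈ Finset.range N, C (RatFunc.X ^ i) * map (algebraMap F (RatFunc F)) (v i) := by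
  simp [sumEpsPow, map_map, RatFunc.algebraMap_X]

theorem Formula.exists_eval_eq_of_approx [Infinite F] {f : MvPolynomial ℕ F} {e : ℕ}
    {ferr : ℕ → MvPolynomial ℕ F} (φ : Formula (RatFunc F))
    (hφ : φ.eval = liftε F f + ∑ i ∈ Finset.range e,
      C ((RatFunc.X : RatFunc F) ^ (i + 1)) * liftε F (ferr i)) :
    ∃ ψ : Formula F, ψ.size ≤ (e + 1) * (φ.size + 2) ∧ ψ.eval = f := by
  set v : ℕ → MvPolynomial ℕ F := fun i => if i = 0 then f else ferr (i - 1)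
  have hφG : φ.eval = map (algebraMap (Polynomial F) (RatFunc F)) (sumEpsPow v (e + 1)) := by
    rw [map_algebraMap_sumEpsPow, Finset.sum_range_succ', hφ, add_comm]
    simp [v, liftε]
  obtain ⟨α, hα, hdefined⟩ := RatFunc.exists_injective_forall_mem_definedAt φ.consts (e + 1)
  choose σ hσsize hσ using fun j => φ.exists_specialize _ hφG (hdefined j)
  obtain ⟨w, hw⟩ := exists_sum_mul_pow_eq_ite hα
  let term : Fin (e + 1) → Formula F := fun j => .mul (.const (w j)) (σ j)
  refine ⟨Formula.sum (List.ofFn term), ?_, ?_⟩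
  · have hterm : ∀ τ ∈ List.ofFn term, τ.size ≤ φ.size + 1 :=
      List.forall_mem_ofFn_iff.2 fun j => by simp [term, Formula.size, hσsize]
    simpa using Formula.size_sum_le hterm
  · rw [Formula.eval_sum, List.map_ofFn, List.sum_ofFn]
    simp only [Function.comp_apply, term, Formula.eval, hσ, map_evalRingHom_sumEpsPow,
      ← smul_eq_C_mul]
    exact sum_smul_sum_pow_smul hw v

end

theorem statement11_general (F : Type) [Field F] [Infinite F] :
    PolyApproxClosure F (VPe (RatFunc F)) = VPe F := by
  ext f
  constructor
  · rintro ⟨hf, e, he, ferr, -, s, hs, hformula⟩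
    refine ⟨hf, fun n => (e n + 1) * (s n + 2), (he.add_const 1).mul (hs.add_const 2),
      fun n => ?_⟩
    obtain ⟨φ, hφsize, hφ⟩ := hformula n
    obtain ⟨ψ, hψsize, hψ⟩ := φ.exists_eval_eq_of_approx hφ
    exact ⟨ψ, hψsize.trans (Nat.mul_le_mul_left _ (by omega)), hψ⟩
  · intro hf
    refine ⟨hf.1, fun _ => 0, ⟨0, fun n => by simp⟩, fun _ _ => 0, ?_⟩
    simpa [liftε] using VPe.map (algebraMap F (RatFunc F)) hf

/-- if `F` is infinite with `char F ≠ 2`, the poly-approximation closure of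
`VPe(F)` equals `VPe(F)`. -/
theorem statement11 (F : Type) [Field F] [Infinite F] (hF : ringChar F ≠ 2) :
    PolyApproxClosure F (VPe (RatFunc F)) = VPe F :=
  statement11_general F

end
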